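/- For every n ≥ 2, every t ∈ [0, 2π), all M₁, M₂ ∈ L_n and all k, l in {1, ..., n}, one has ⟨φ_k^t, (M₁ ⊗ M₂) φ_k^t⟩ = ⟨φ_l^t, (M₁ ⊗ M₂) φ_l^t⟩. -/

import Mathlib

open Matrix

/-- η = exp(iπ/4). -/
noncomputable def eta : ℂ := Complex.exp (Real.pi / 4 * Complex.I)

/-- U = diag(η, conj η) ∈ M₂(ℂ). -/
noncomputable def U : Matrix (Fin 2) (Fin 2) ℂ := !![eta, 0; 0, star eta]

/-- L_n ⊂ M_{2n}(ℂ): n×n block matrices (ℂ^{2n} being identified with n copies of ℂ²)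
whose diagonal 2×2 blocks all equal a common A ∈ M₂(ℂ), whose (i,j) block is
λ_{ij}U* for i < j and λ_{ij}U for i > j. -/
noncomputable def Ln (n : ℕ) : Set (Matrix (Fin n × Fin 2) (Fin n × Fin 2) ℂ) :=
  {M | ∃ (A : Matrix (Fin 2) (Fin 2) ℂ) (lam : Fin n → Fin n → ℂ),
    ∀ (i j : Fin n) (a b : Fin 2),
      M (i, a) (j, b) =
        if i = j then A a b
        else if (i : ℕ) < (j : ℕ) then lam i j * Uᴴ a b
        else lam i j * U a b}

open Kronecker Real

/-- φ_k^t = (|2k−1⟩⊗|2k−1⟩ + e^{it}|2k⟩⊗|2k⟩)/√2 ∈ ℂ^{2n} ⊗ ℂ^{2n}, where |2k−1⟩ = (k,0)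
and |2k⟩ = (k,1) in the identification of ℂ^{2n} with n copies of ℂ². -/
noncomputable def phiK (n : ℕ) (t : ℝ) (k : Fin n) :
    (Fin n × Fin 2) × (Fin n × Fin 2) → ℂ := fun p =>
  ((if p = ((k, 0), (k, 0)) then 1 else 0) +
    Complex.exp (t * Complex.I) * (if p = ((k, 1), (k, 1)) then 1 else 0)) / Real.sqrt 2

/-!
`φ_k^t` is the image of the coefficient vector `(1, e^{it})/√2` under `a ↦ ((k, a), (k, a))`,
so its expectation value for `M₁ ⊗ M₂` is the quadratic form of the compression of `M₁ ⊗ M₂`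
to those two indices. That compression is the Hadamard product of the `k`-th diagonal blocks of
`M₁` and `M₂`, and for matrices in `L_n` these blocks do not depend on `k`.
-/

theorem Matrix.star_sum_single_dotProduct_mulVec_sum_single {ι κ R : Type*} [Fintype ι]
    [Fintype κ] [DecidableEq κ] [CommSemiring R] [StarRing R]
    (N : Matrix κ κ R) (e : ι → κ) (w : ι → R) :
    star (∑ a, Pi.single (e a) (w a)) ⬝ᵥ N *ᵥ ∑ a, Pi.single (e a) (w a) =
      star w ⬝ᵥ N.submatrix e e *ᵥ w := by
  simp only [star_sum, Pi.star_single, sum_dotProduct, single_dotProduct, mulVec_sum,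
    Finset.sum_apply, mulVec_single, Pi.smul_apply, col_apply, MulOpposite.smul_eq_mul_unop,
    MulOpposite.unop_op]
  simp only [mulVec, dotProduct, Finset.mul_sum, submatrix_apply, Pi.star_apply]

theorem Matrix.kroneckerMap_submatrix_pair {R l m n p : Type*} [Mul R] {ι ι' : Type*}
    (M₁ : Matrix l m R) (M₂ : Matrix n p R) (e : ι → l) (e' : ι' → m) (f : ι → n)
    (f' : ι' → p) :
    (M₁ ⊗ₖ M₂).submatrix (fun a => (e a, f a)) (fun b => (e' b, f' b)) =
      M₁.submatrix e e' ⊙ M₂.submatrix f f' :=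
  rfl

theorem exists_diagonal_block_of_mem_Ln {n : ℕ} {M : Matrix (Fin n × Fin 2) (Fin n × Fin 2) ℂ}
    (hM : M ∈ Ln n) : ∃ A, ∀ k, M.submatrix (k, ·) (k, ·) = A := by
  obtain ⟨A, _, hA⟩ := hM
  exact ⟨A, fun k => Matrix.ext fun a b => by simp [hA]⟩

noncomputable def phiCoeff (t : ℝ) : Fin 2 → ℂ :=
  ![1 / Real.sqrt 2, Complex.exp (t * Complex.I) / Real.sqrt 2]

theorem phiK_eq_sum_single (n : ℕ) (t : ℝ) (k : Fin n) :
    phiK n t k = ∑ a, Pi.single ((k, a), (k, a)) (phiCoeff t a) := by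
  funext p
  simp only [phiK, phiCoeff, Fin.sum_univ_two, Finset.sum_apply, Pi.single_apply,
    Matrix.cons_val_zero, Matrix.cons_val_one]
  split_ifs <;> simp_all

theorem phiK_inner_kron_independent_of_k_general (n : ℕ) (t : ℝ)
    (M₁ M₂ : Matrix (Fin n × Fin 2) (Fin n × Fin 2) ℂ)
    (hM₁ : M₁ ∈ Ln n) (hM₂ : M₂ ∈ Ln n) (k l : Fin n) :
    star (phiK n t k) ⬝ᵥ (M₁ ⊗ₖ M₂).mulVec (phiK n t k) =
      star (phiK n t l) ⬝ᵥ (M₁ ⊗ₖ M₂).mulVec (phiK n t l) := by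
  obtain ⟨A₁, hA₁⟩ := exists_diagonal_block_of_mem_Ln hM₁
  obtain ⟨A₂, hA₂⟩ := exists_diagonal_block_of_mem_Ln hM₂
  have hblock : ∀ k : Fin n, (M₁ ⊗ₖ M₂).submatrix (fun a => ((k, a), (k, a)))
      (fun b => ((k, b), (k, b))) = A₁ ⊙ A₂ := fun k => by
    rw [kroneckerMap_submatrix_pair, ← hA₁ k, ← hA₂ k]
  simp only [phiK_eq_sum_single, star_sum_single_dotProduct_mulVec_sum_single, hblock]

/-- For every n ≥ 2, t ∈ [0, 2π), M₁, M₂ ∈ L_n and all k, l,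
⟨φ_k^t, (M₁ ⊗ M₂)φ_k^t⟩ = ⟨φ_l^t, (M₁ ⊗ M₂)φ_l^t⟩. -/
theorem phiK_inner_kron_independent_of_k (n : ℕ) (hn : 2 ≤ n) (t : ℝ)
    (ht : t ∈ Set.Ico 0 (2 * π))
    (M₁ M₂ : Matrix (Fin n × Fin 2) (Fin n × Fin 2) ℂ)
    (hM₁ : M₁ ∈ Ln n) (hM₂ : M₂ ∈ Ln n) (k l : Fin n) :
    star (phiK n t k) ⬝ᵥ (M₁ ⊗ₖ M₂).mulVec (phiK n t k) =
      star (phiK n t l) ⬝ᵥ (M₁ ⊗ₖ M₂).mulVec (phiK n t l) :=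
  phiK_inner_kron_independent_of_k_general n t M₁ M₂ hM₁ hM₂ k l
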